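/- Suppose c ≠ 0. If the index set β(x) := {i : |xᵢ - w(x)μᵢ| = λ} is empty, then the dual multiplier map w(·) is differentiable at x, with (w'(x))ᵢ = μᵢ/Σ_{j∈α(x)} μⱼ² for i ∈ α(x), and 0 otherwise. -/

import Mathlib

open Finset Topology Filter

/-- Scalar soft-thresholding: `Prox_{λ|·|}(t) = sign(t)·(|t|-λ)₊`. -/
noncomputable def st (lam t : ℝ) : ℝ := Real.sign t * max (|t| - lam) 0

lemma st_of_gt {lam t : ℝ} (hlam : 0 < lam) (h : lam < t) : st lam t = t - lam := by
  have ht : 0 < t := hlam.trans h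
  rw [st, Real.sign_of_pos ht, abs_of_pos ht, max_eq_left (by linarith), one_mul]

lemma st_neg (lam t : ℝ) : st lam (-t) = - st lam t := by
  rcases lt_trichotomy t 0 with h|h|h
  · rw [st, st, Real.sign_of_neg h, Real.sign_of_pos (by linarith : (0:ℝ) < -t), abs_neg]; ring
  · simp [h, st]
  · rw [st, st, Real.sign_of_pos h, Real.sign_of_neg (by linarith : (-t:ℝ) < 0), abs_neg]; ring

lemma st_of_lt {lam t : ℝ} (hlam : 0 < lam) (h : t < -lam) : st lam t = t + lam := by
  have h2 := st_of_gt hlam (show lam < -t by linarith)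
  rw [st_neg] at h2; linarith

lemma st_of_abs_le {lam t : ℝ} (h : |t| ≤ lam) : st lam t = 0 := by
  rw [st, max_eq_right (by linarith), mul_zero]

lemma st_eq {lam : ℝ} (hlam : 0 ≤ lam) (t : ℝ) :
    st lam t = max (t - lam) 0 + min (t + lam) 0 := by
  rcases lt_trichotomy t 0 with h|h|h
  · rw [st, Real.sign_of_neg h, abs_of_neg h, max_eq_right (by linarith : t - lam ≤ (0:ℝ))]
    rcases le_or_gt (t + lam) 0 with h2|h2
    · rw [min_eq_left h2, max_eq_left (by linarith)]; ring
    · rw [min_eq_right h2.le, max_eq_right (by linarith)]; ring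
  · subst h
    rw [st, Real.sign_zero, zero_mul, max_eq_right (by linarith : (0:ℝ) - lam ≤ 0),
      min_eq_right (by linarith : (0:ℝ) ≤ 0 + lam)]; ring
  · rw [st, Real.sign_of_pos h, abs_of_pos h, one_mul,
      min_eq_right (by linarith : (0:ℝ) ≤ t + lam), add_zero]

lemma st_mono {lam : ℝ} (hlam : 0 ≤ lam) : Monotone (st lam) := by
  intro a b hab
  rw [st_eq hlam, st_eq hlam]
  exact add_le_add (max_le_max (by linarith) le_rfl) (min_le_min (by linarith) le_rfl)

lemma st_lt_of_gt {lam s t : ℝ} (hlam : 0 < lam) (ht : lam < t) (hst : s < t) :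
    st lam s < st lam t := by
  rw [st_of_gt hlam ht]
  rcases lt_or_ge lam s with h|h
  · rw [st_of_gt hlam h]; linarith
  · have h1 : st lam s ≤ 0 := by
      rw [st_eq hlam.le, max_eq_right (by linarith), zero_add]
      exact min_le_right _ _
    linarith

lemma st_lt_of_lt {lam s t : ℝ} (hlam : 0 < lam) (ht : t < -lam) (hst : t < s) :
    st lam t < st lam s := by
  have h := st_lt_of_gt hlam (show lam < -t by linarith) (show -s < -t by linarith)
  rw [st_neg, st_neg] at h; linarith

lemma term_anti {lam m a w1 w2 : ℝ} (hlam : 0 ≤ lam) (h : w1 ≤ w2) :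
    m * st lam (a - w2 * m) ≤ m * st lam (a - w1 * m) := by
  rcases lt_trichotomy m 0 with hm|hm|hm
  · exact mul_le_mul_of_nonpos_left (st_mono hlam (show a - w1*m ≤ a - w2*m by nlinarith)) hm.le
  · simp [hm]
  · exact mul_le_mul_of_nonneg_left (st_mono hlam (show a - w2*m ≤ a - w1*m by nlinarith)) hm.le

lemma term_strict {lam m a w1 w2 : ℝ} (hlam : 0 < lam) (hm : m ≠ 0)
    (hab : lam < |a - w1 * m|) (h : w1 < w2) :
    m * st lam (a - w2 * m) < m * st lam (a - w1 * m) := by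
  rcases hm.lt_or_gt with hm|hm
  · have hlt : a - w1*m < a - w2*m := by nlinarith
    rcases lt_abs.1 hab with h1|h1
    · have e1 := st_of_gt hlam h1
      have e2 := st_of_gt hlam (h1.trans hlt)
      rw [e1, e2]; nlinarith
    · exact mul_lt_mul_of_neg_left (st_lt_of_lt hlam (by linarith) hlt) hm
  · have hlt : a - w2*m < a - w1*m := by nlinarith
    rcases lt_abs.1 hab with h1|h1
    · exact mul_lt_mul_of_pos_left (st_lt_of_gt hlam h1 hlt) hm
    · have e1 := st_of_lt hlam (show a - w1*m < -lam by linarith)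
      have e2 := st_of_lt hlam (show a - w2*m < -lam by linarith)
      rw [e1, e2]; nlinarith

lemma uniq {n : ℕ} (μ : Fin n → ℝ) (hμ : ∀ i, μ i ≠ 0) {lam : ℝ} (hlam : 0 < lam)
    {c : ℝ} (hc : c ≠ 0) (y : Fin n → ℝ) {w1 w2 : ℝ}
    (h1 : ∑ i, μ i * st lam (y i - w1 * μ i) = c)
    (h2 : ∑ i, μ i * st lam (y i - w2 * μ i) = c) : w1 = w2 := by
  have key : ∀ v1 v2 : ℝ, v1 < v2 → (∑ i, μ i * st lam (y i - v1 * μ i) = c) →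
      ∑ i, μ i * st lam (y i - v2 * μ i) < c := by
    intro v1 v2 hv hsum
    obtain ⟨i0, hi0⟩ : ∃ i, st lam (y i - v1 * μ i) ≠ 0 := by
      by_contra hall; push_neg at hall
      apply hc; rw [← hsum]
      simp [hall]
    have habs : lam < |y i0 - v1 * μ i0| := by
      by_contra hle; push_neg at hle; exact hi0 (st_of_abs_le hle)
    calc ∑ i, μ i * st lam (y i - v2*μ i) < ∑ i, μ i * st lam (y i - v1*μ i) :=
          Finset.sum_lt_sum (fun i _ => term_anti hlam.le hv.le)
            ⟨i0, Finset.mem_univ _, term_strict hlam (hμ i0) habs hv⟩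
      _ = c := hsum
  rcases lt_trichotomy w1 w2 with h|h|h
  · exact absurd h2 (key w1 w2 h h1).ne
  · exact h
  · exact absurd h1 (key w2 w1 h h2).ne

/-- With `c ≠ 0`: if `β(x) = {i : |xᵢ - w(x)μᵢ| = λ}` is empty, then the dual multiplier
map `w(·)` is differentiable at `x`, with `(w'(x))ᵢ = μᵢ / Σ_{j∈α(x)} μⱼ²` for `i ∈ α(x)`
and `0` otherwise. -/
theorem stmt9 (n : ℕ) (μ : Fin n → ℝ) (hμ : ∀ i, μ i ≠ 0)
    (lam : ℝ) (hlam : 0 < lam) (c : ℝ) (hc : c ≠ 0)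
    (w : (Fin n → ℝ) → ℝ)
    (hw : ∀ y : Fin n → ℝ, ∑ i, μ i * st lam (y i - w y * μ i) = c)
    (x : Fin n → ℝ)
    (hβ : ∀ i, |x i - w x * μ i| ≠ lam) :
    HasFDerivAt w
      (∑ i ∈ Finset.univ.filter (fun i => lam < |x i - w x * μ i|),
        (μ i / ∑ j ∈ Finset.univ.filter (fun j => lam < |x j - w x * μ j|), μ j ^ 2) •
          (ContinuousLinearMap.proj i : (Fin n → ℝ) →L[ℝ] ℝ)) x := by
  classical
  set A : Finset (Fin n) := Finset.univ.filter (fun i => lam < |x i - w x * μ i|) with hAdef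
  set S : ℝ := ∑ j ∈ A, μ j ^ 2 with hSdef
  -- A is nonempty
  have hA : A.Nonempty := by
    obtain ⟨i0, hi0⟩ : ∃ i, μ i * st lam (x i - w x * μ i) ≠ 0 := by
      by_contra hall; push_neg at hall
      exact hc (by rw [← hw x]; exact Finset.sum_eq_zero fun i _ => hall i)
    refine ⟨i0, Finset.mem_filter.2 ⟨Finset.mem_univ _, ?_⟩⟩
    by_contra hle; push_neg at hle
    exact hi0 (by rw [st_of_abs_le hle, mul_zero])
  have hS : 0 < S := Finset.sum_pos (fun i _ => lt_of_le_of_ne (sq_nonneg _) (Ne.symm (pow_ne_zero 2 (hμ i)))) hA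
  set g : (Fin n → ℝ) → ℝ := fun y => w x + (∑ i ∈ A, μ i * (y i - x i)) / S with hgdef
  have hgx : g x = w x := by simp [hgdef]
  have hgcont : Continuous g := by
    apply continuous_const.add
    apply Continuous.div_const
    exact continuous_finset_sum _ fun i _ => (continuous_const.mul ((continuous_apply i).sub continuous_const))
  set L : (Fin n → ℝ) →L[ℝ] ℝ :=
    ∑ i ∈ A, (μ i / S) • (ContinuousLinearMap.proj i : (Fin n → ℝ) →L[ℝ] ℝ) with hLdef
  have hLy : ∀ y : Fin n → ℝ, L y = ∑ i ∈ A, μ i / S * y i := by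
    intro y
    rw [hLdef, ContinuousLinearMap.sum_apply]
    exact Finset.sum_congr rfl fun i _ => by simp
  have hdiv : ∀ z : Fin n → ℝ, (∑ i ∈ A, μ i * z i) / S = ∑ i ∈ A, μ i / S * z i := by
    intro z; rw [Finset.sum_div]; exact Finset.sum_congr rfl fun i _ => by ring
  have hgdf : HasFDerivAt g L x := by
    have h0 : HasFDerivAt (fun y : Fin n → ℝ => (w x - L x) + L y) L x :=
      L.hasFDerivAt.const_add _
    have hfun : g = fun y : Fin n → ℝ => (w x - L x) + L y := by
      funext y
      rw [hgdef]
      simp only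
      rw [hLy, hLy]
      have e1 : ∑ i ∈ A, μ i * (y i - x i) = (∑ i ∈ A, μ i * y i) - ∑ i ∈ A, μ i * x i := by
        rw [← Finset.sum_sub_distrib]; exact Finset.sum_congr rfl fun i _ => by ring
      rw [e1, sub_div, hdiv, hdiv]
      ring
    rw [hfun]; exact h0
  -- eventual equality
  have hP : ∀ i : Fin n, ∀ᶠ y in 𝓝 x,
      st lam (y i - g y * μ i) = st lam (x i - w x * μ i) +
        (if lam < |x i - w x * μ i| then (y i - g y * μ i) - (x i - w x * μ i) else 0) := by
    intro i
    have hci : Continuous (fun y : Fin n → ℝ => y i - g y * μ i) :=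
      (continuous_apply i).sub (hgcont.mul continuous_const)
    have hvx : x i - g x * μ i = x i - w x * μ i := by rw [hgx]
    rcases (hβ i).lt_or_gt with h3|h1
    · -- |t i| < lam
      have hev : ∀ᶠ y in 𝓝 x, |y i - g y * μ i| < lam := by
        have : ∀ᶠ z in 𝓝 (|x i - g x * μ i|), z < lam := by
          rw [hvx]; exact eventually_lt_nhds h3
        exact (hci.abs.tendsto x).eventually this
      filter_upwards [hev] with y hy
      rw [st_of_abs_le hy.le, st_of_abs_le h3.le, if_neg (not_lt.2 h3.le), add_zero]
    · rcases lt_abs.1 h1 with h1p|h1n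
      · have hev : ∀ᶠ y in 𝓝 x, lam < y i - g y * μ i := by
          have : ∀ᶠ z in 𝓝 (x i - g x * μ i), lam < z := by
            rw [hvx]; exact eventually_gt_nhds h1p
          exact (hci.tendsto x).eventually this
        filter_upwards [hev] with y hy
        rw [st_of_gt hlam hy, st_of_gt hlam h1p, if_pos h1]; ring
      · have h1n' : x i - w x * μ i < -lam := by linarith
        have hev : ∀ᶠ y in 𝓝 x, y i - g y * μ i < -lam := by
          have : ∀ᶠ z in 𝓝 (x i - g x * μ i), z < -lam := by
            rw [hvx]; exact eventually_lt_nhds h1n'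
          exact (hci.tendsto x).eventually this
        filter_upwards [hev] with y hy
        rw [st_of_lt hlam hy, st_of_lt hlam h1n', if_pos h1]; ring
  have hEq : w =ᶠ[𝓝 x] g := by
    have hall := Filter.eventually_all.2 hP
    filter_upwards [hall] with y hy
    have hsum : ∑ i, μ i * st lam (y i - g y * μ i) = c := by
      have e1 : ∑ i, μ i * st lam (y i - g y * μ i)
          = ∑ i, (μ i * st lam (x i - w x * μ i) +
              (if lam < |x i - w x * μ i| then μ i * ((y i - g y * μ i) - (x i - w x * μ i)) else 0)) := by
        refine Finset.sum_congr rfl fun i _ => ?_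
        rw [hy i]; split_ifs <;> ring
      rw [e1, Finset.sum_add_distrib, hw x, ← Finset.sum_filter, ← hAdef]
      have e2 : ∑ i ∈ A, μ i * ((y i - g y * μ i) - (x i - w x * μ i)) = 0 := by
        have e3 : ∀ i, μ i * ((y i - g y * μ i) - (x i - w x * μ i))
            = μ i * (y i - x i) - (g y - w x) * μ i ^ 2 := fun i => by ring
        rw [Finset.sum_congr rfl fun i _ => e3 i, Finset.sum_sub_distrib, ← Finset.mul_sum]
        have e4 : g y - w x = (∑ i ∈ A, μ i * (y i - x i)) / S := by rw [hgdef]; ring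
        rw [e4, div_mul_cancel₀ _ hS.ne', sub_self]
      rw [e2, add_zero]
    exact uniq μ hμ hlam hc y (hw y) hsum
  exact hgdf.congr_of_eventuallyEq hEq
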